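/- arXiv:2411.07214 — 5 statements merged into one kernel-verified Lean document; each statement's English description precedes it below -/
import Mathlib

section
/- Let H be a finite hypergraph without multiple edges. Then the sum of the squares of the eigenvalues of U(H) equals (Σ_{S ∈ I(H)} d_H(S)) − ∂(H), where ∂(H) is the number of edges of cardinality at least 2 that are properly contained in another edge. -/
variable {V : Type} [Fintype V] [DecidableEq V]

/-- A finite hypergraph: a finite vertex set and a multiset of nonempty edges. -/
structure FinHypergraph (V : Type) [Fintype V] [DecidableEq V] where
  verts : Finset V
  edges : Multiset (Finset V)
  edges_sub : ∀ e ∈ edges, e ⊆ verts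
  edges_nonempty : ∀ e ∈ edges, e.Nonempty

open Classical in
/-- `IH H` is `I(H)`: all parts of 2-partitions of edges plus all singletons of `V(H)`. -/
noncomputable def IH (H : FinHypergraph V) : Finset (Finset V) :=
  Finset.univ.filter fun S =>
    (S.Nonempty ∧ ∃ e ∈ H.edges, S ⊂ e) ∨ ∃ v ∈ H.verts, S = {v}

/-- The unified matrix of a hypergraph, indexed by `I(H)`. -/
noncomputable def U (H : FinHypergraph V) : Matrix ↥(IH H) ↥(IH H) ℝ := fun S T =>
  if (S : Finset V) = (T : Finset V) then
    (if (S : Finset V).card = 1 then (H.edges.count (S : Finset V) : ℝ) else 0)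
  else if Disjoint (S : Finset V) (T : Finset V) then
    (H.edges.count ((S : Finset V) ∪ (T : Finset V)) : ℝ)
  else 0

/-- Degree of a vertex: number of edges (with multiplicity) containing it. -/
def deg (H : FinHypergraph V) (v : V) : ℕ := (H.edges.filter (fun e => v ∈ e)).card

/-- Unified degree of a set `S`: number of edges (with multiplicity) containing `S`. -/
def udeg (H : FinHypergraph V) (S : Finset V) : ℕ := (H.edges.filter (fun e => S ⊆ e)).card

/-- `incl H` = ∂(H): number of edges of cardinality ≥ 2 properly contained in another edge. -/
noncomputable def incl (H : FinHypergraph V) : ℕ :=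
  Multiset.card (H.edges.filter (fun e => 2 ≤ e.card ∧ ∃ e' ∈ H.edges, e ⊂ e'))

/-- A hypergraph is simple if it has no multiple edges and no loops. -/
def Simple (H : FinHypergraph V) : Prop :=
  H.edges.Nodup ∧ ∀ e ∈ H.edges, 2 ≤ e.card

/-- `tau S` = τ(S): the set of unordered 2-partitions of `S`. -/
def tau (S : Finset V) : Finset (Finset (Finset V)) :=
  (S.powerset.filter fun A => A.Nonempty ∧ A ⊂ S).image fun A => {A, S \ A}

/-! Since `U(H)` is symmetric, `∑ λᵢ² = tr U(H)² = ∑_{S,T} U_{ST}²`, and without multiple edges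
every entry is `0` or `1`, so this counts the nonzero entries. In the row of `S ∈ I(H)` the
off-diagonal ones correspond to the edges `e ⊋ S` (via `T = e \ S`), and the diagonal one to `S`
being a loop; so the row misses `d_H(S)` by one exactly when `S` is an edge of size `≥ 2`, and the
edges of size `≥ 2` lying in `I(H)` are exactly the included ones. -/

open Matrix Unitary in
theorem Matrix.IsHermitian.trace_mul_self_eq_sum_eigenvalues_sq {𝕜 n : Type*} [RCLike 𝕜]
    [Fintype n] [DecidableEq n] {A : Matrix n n 𝕜} (hA : A.IsHermitian) :
    (A * A).trace = ∑ i, (hA.eigenvalues i : 𝕜) ^ 2 := by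
  conv_lhs => rw [hA.spectral_theorem, ← map_mul, conjStarAlgAut_apply, trace_mul_cycle,
    coe_star_mul_self, one_mul, diagonal_mul_diagonal, trace_diagonal]
  simp [sq]

namespace FinHypergraph

variable (H : FinHypergraph V)

lemma mem_IH {S : Finset V} :
    S ∈ IH H ↔ (S.Nonempty ∧ ∃ e ∈ H.edges, S ⊂ e) ∨ ∃ v ∈ H.verts, S = {v} := by
  simp [IH]

lemma nonempty_of_mem_IH {S : Finset V} (hS : S ∈ IH H) : S.Nonempty := by
  rcases (H.mem_IH).mp hS with ⟨hS, -⟩ | ⟨v, -, rfl⟩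
  · exact hS
  · exact Finset.singleton_nonempty v

lemma sdiff_mem_IH {S e : Finset V} (hS : S.Nonempty) (he : e ∈ H.edges) (hSe : S ⊂ e) :
    e \ S ∈ IH H :=
  (H.mem_IH).mpr <| Or.inl ⟨Finset.sdiff_nonempty.mpr hSe.not_subset, e, he,
    Finset.sdiff_ssubset hSe.subset hS⟩

lemma udeg_eq_card_filter_ssubset_add_count (S : Finset V) :
    udeg H S = Multiset.card (H.edges.filter (S ⊂ ·)) + H.edges.count S := by
  rw [udeg, Multiset.count_eq_card_filter_eq, ← Multiset.card_add, Multiset.filter_add_filter]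
  have hdisj : H.edges.filter (fun e => S ⊂ e ∧ S = e) = 0 :=
    Multiset.filter_eq_nil.mpr fun e _ h => h.1.ne h.2
  rw [hdisj, add_zero]
  exact congrArg _ <| Multiset.filter_congr fun e _ =>
    subset_iff_ssubset_or_eq.trans (by rw [eq_comm])

/-- `T ↦ S ∪ T` is a bijection from the parts `T ∈ I(H)` disjoint from `S` onto the sets
strictly containing `S`, with inverse `e ↦ e \ S`. -/
lemma sum_count_union_of_disjoint {S : Finset V} (hS : S.Nonempty) :
    ∑ T ∈ (IH H).filter (Disjoint S), H.edges.count (S ∪ T) =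
      Multiset.card (H.edges.filter (S ⊂ ·)) := by
  have hinj : Set.InjOn (S ∪ ·) ((IH H).filter (Disjoint S)) := fun T hT T' hT' h => by
    simp only [Finset.coe_filter, Set.mem_ofPred_eq] at hT hT'
    rw [← Finset.union_sdiff_cancel_left hT.2, ← Finset.union_sdiff_cancel_left hT'.2]
    exact congrArg (· \ S) h
  rw [← Multiset.sum_count_eq_card (s := ((IH H).filter (Disjoint S)).image (S ∪ ·)),
    Finset.sum_image hinj]
  · refine Finset.sum_congr rfl fun T hT => ?_
    rw [Finset.mem_filter] at hT
    rw [Multiset.count_filter_of_pos]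
    refine Finset.ssubset_iff_subset_ne.mpr ⟨Finset.subset_union_left, fun h => ?_⟩
    have hTT : Disjoint T T := hT.2.mono_left (Finset.left_eq_union.mp h)
    exact (H.nonempty_of_mem_IH hT.1).ne_empty (Finset.disjoint_self_iff_empty T |>.mp hTT)
  · intro e he
    rw [Multiset.mem_filter] at he
    refine Finset.mem_image.mpr ⟨e \ S, ?_, Finset.union_sdiff_of_subset he.2.subset⟩
    exact Finset.mem_filter.mpr ⟨H.sdiff_mem_IH hS he.1 he.2, Finset.disjoint_sdiff⟩

lemma U_apply_eq_add (S T : IH H) :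
    U H S T = (if (S : Finset V) = T then
        (if (S : Finset V).card = 1 then (H.edges.count (S : Finset V) : ℝ) else 0) else 0) +
      if Disjoint (S : Finset V) T then (H.edges.count ((S : Finset V) ∪ T) : ℝ) else 0 := by
  by_cases hST : (S : Finset V) = T
  · have : ¬Disjoint (S : Finset V) T := by
      rw [← hST, Finset.disjoint_self_iff_empty]
      exact (H.nonempty_of_mem_IH S.2).ne_empty
    simp only [U, if_pos hST, if_neg this, add_zero]
  · simp [U, hST]

lemma sum_U_apply (S : IH H) :
    ∑ T, U H S T = (udeg H S : ℝ) -
      if (S : Finset V).card = 1 then 0 else (H.edges.count (S : Finset V) : ℝ) := by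
  simp only [U_apply_eq_add, Finset.sum_add_distrib]
  rw [Finset.sum_coe_sort (IH H) (fun T => if (S : Finset V) = T then
        (if (S : Finset V).card = 1 then (H.edges.count (S : Finset V) : ℝ) else 0) else 0),
    Finset.sum_coe_sort (IH H) (fun T => if Disjoint (S : Finset V) T then
        (H.edges.count ((S : Finset V) ∪ T) : ℝ) else 0),
    Finset.sum_ite_eq _ _ _, if_pos S.2, ← Finset.sum_filter, ← Nat.cast_sum,
    H.sum_count_union_of_disjoint (H.nonempty_of_mem_IH S.2),
    H.udeg_eq_card_filter_ssubset_add_count]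
  split_ifs <;> push_cast <;> ring

lemma sum_IH_count_of_card_ne_one :
    ∑ S ∈ IH H, (if S.card = 1 then 0 else H.edges.count S) = incl H := by
  rw [incl, ← Multiset.sum_count_eq_card (s := IH H)]
  · refine Finset.sum_congr rfl fun S hS => ?_
    rw [Multiset.count_filter]
    by_cases hSE : S ∈ H.edges
    · have hpos := (H.edges_nonempty S hSE).card_pos
      rcases (H.mem_IH).mp hS with ⟨-, e, he, hSe⟩ | ⟨v, -, rfl⟩
      · simp only [show ∃ e ∈ H.edges, S ⊂ e from ⟨e, he, hSe⟩, and_true]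
        split_ifs <;> omega
      · simp
    · simp [Multiset.count_eq_zero.mpr hSE]
  · intro S hS
    obtain ⟨-, hcard, e, he, hSe⟩ := Multiset.mem_filter.mp hS
    exact (H.mem_IH).mpr <| Or.inl ⟨Finset.card_pos.mp (by omega), e, he, hSe⟩

lemma U_apply_mul_self_of_nodup (hd : H.edges.Nodup) (S T : IH H) :
    U H S T * U H S T = U H S T := by
  have hcount : ∀ e, (H.edges.count e : ℝ) * H.edges.count e = H.edges.count e := fun e => by
    rcases Nat.le_one_iff_eq_zero_or_eq_one.mp (Multiset.nodup_iff_count_le_one.mp hd e) with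
      h | h <;> simp [h]
  unfold U
  split_ifs <;> simp [hcount]

end FinHypergraph

theorem sum_sq_eigenvalues_of_nodup (H : FinHypergraph V) (hd : H.edges.Nodup)
    (hU : (U H).IsHermitian) :
    ∑ i, (hU.eigenvalues i) ^ 2 =
      (∑ S ∈ IH H, (udeg H S : ℝ)) - (incl H : ℝ) := by
  calc ∑ i, hU.eigenvalues i ^ 2 = (U H * U H).trace := by
        simpa using hU.trace_mul_self_eq_sum_eigenvalues_sq.symm
    _ = ∑ S, ∑ T, U H S T := by
        refine Finset.sum_congr rfl fun S _ => Finset.sum_congr rfl fun T _ => ?_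
        show U H S T * U H T S = U H S T
        rw [← hU.apply T S, star_trivial, H.U_apply_mul_self_of_nodup hd]
    _ = ∑ S : IH H, ((udeg H S : ℝ) -
          if (S : Finset V).card = 1 then 0 else (H.edges.count (S : Finset V) : ℝ)) :=
        Finset.sum_congr rfl fun S _ => H.sum_U_apply S
    _ = (∑ S ∈ IH H, (udeg H S : ℝ)) - (incl H : ℝ) := by
        rw [Finset.sum_sub_distrib, ← H.sum_IH_count_of_card_ne_one]
        push_cast
        rw [Finset.sum_coe_sort (IH H) (fun S => (udeg H S : ℝ)),
          Finset.sum_coe_sort (IH H) (fun S => if S.card = 1 then (0 : ℝ) else H.edges.count S)]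
end

section
/- Let H be a simple hypergraph with e-index k, and suppose u, v are vertices of H with exact distance ed_H(u,v) = t < ∞. Then the matrices I_k, U(H), U(H)², ..., U(H)^t are linearly independent over ℂ. -/
variable {V : Type} [Fintype V] [DecidableEq V]

/-- Two parts are adjacent when they form a 2-partition of an edge of `H`. -/
def Adj (H : FinHypergraph V) (S T : Finset V) : Prop :=
  S.Nonempty ∧ T.Nonempty ∧ Disjoint S T ∧ S ∪ T ∈ H.edges

/-- There is an exact path of length `n` joining some `S ∋ u` and `S' ∋ v`. -/
def ExactPathBetween (H : FinHypergraph V) (u v : V) (n : ℕ) : Prop :=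
  ∃ l : List (Finset V), l.length = n + 1 ∧ l.Nodup ∧ (∀ S ∈ l, S ∈ IH H) ∧
    l.Chain' (Adj H) ∧ (∃ S, l.head? = some S ∧ u ∈ S) ∧
    (∃ S, l.getLast? = some S ∧ v ∈ S)

/-!
Exact walks of `H` are the walks of the graph `exactGraph H` on `I(H)`, and for a simple
hypergraph `U(H)` is the adjacency matrix of that graph (simplicity removes the diagonal entries,
which count loops, and the edge multiplicities). Hence `(U^r)_{S,T}` counts walks of length `r`.
A shortest exact path `S₀, …, S_t` from `u` to `v` is a geodesic, so `S_i` is at distance `i`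
from `S₀`: the matrix `((U^r)_{S₀,S_i})_{r,i}` vanishes for `r < i` and is nonzero for `r = i`.
Being triangular with nonzero diagonal, it has independent rows, and a linear relation among
`I, U, …, U^t` would restrict to one among these rows.
-/

namespace SimpleGraph

variable {W R : Type*} {G : SimpleGraph W}

theorem Walk.dist_getVert_of_length_eq_dist {a b : W} (p : G.Walk a b)
    (hp : p.length = G.dist a b) {i : ℕ} (hi : i ≤ p.length) : G.dist a (p.getVert i) = i := by
  simpa [hi] using (length_eq_dist_of_subwalk hp (p.isSubwalk_take i)).symm

variable [DecidableRel G.Adj]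

theorem map_adjMatrix {α β : Type*} [Zero α] [One α] [Zero β] [One β] {f : α → β}
    (hf₀ : f 0 = 0) (hf₁ : f 1 = 1) : (G.adjMatrix α).map f = G.adjMatrix β := by
  ext a b
  by_cases h : G.Adj a b <;> simp [h, hf₀, hf₁]

variable [Fintype W] [DecidableEq W]

theorem adjMatrix_pow_apply_eq_zero_of_lt_dist [Semiring R] {a c : W} {r : ℕ}
    (hr : r < G.dist a c) : (G.adjMatrix R ^ r) a c = 0 := by
  have : IsEmpty {p : G.Walk a c | p.length = r} :=
    ⟨fun ⟨p, hp⟩ => (dist_le p).not_gt (hp ▸ hr)⟩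
  rw [adjMatrix_pow_apply_eq_card_walk, Fintype.card_eq_zero, Nat.cast_zero]

theorem adjMatrix_pow_dist_apply_ne_zero [Semiring R] [CharZero R] {a c : W}
    (hac : G.Reachable a c) : (G.adjMatrix R ^ G.dist a c) a c ≠ 0 := by
  obtain ⟨p, hp⟩ := hac.exists_walk_length_eq_dist
  have : Nonempty {p : G.Walk a c | p.length = G.dist a c} := ⟨⟨p, hp⟩⟩
  rw [adjMatrix_pow_apply_eq_card_walk, Nat.cast_ne_zero]
  exact Fintype.card_ne_zero

open Matrix in
theorem linearIndependent_adjMatrix_pow_of_reachable [CommRing R] [IsDomain R] [CharZero R]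
    {a b : W} (hab : G.Reachable a b) :
    LinearIndependent R (fun r : Fin (G.dist a b + 1) => G.adjMatrix R ^ (r : ℕ)) := by
  obtain ⟨p, hp⟩ := hab.exists_walk_length_eq_dist
  have hdist (i : Fin (G.dist a b + 1)) : G.dist a (p.getVert i) = i :=
    p.dist_getVert_of_length_eq_dist hp (by omega)
  let entries : Matrix W W R →ₗ[R] Fin (G.dist a b + 1) → R :=
    LinearMap.pi fun i => entryLinearMap R R a (p.getVert i)
  let M : Matrix (Fin (G.dist a b + 1)) (Fin (G.dist a b + 1)) R :=
    of fun r i => (G.adjMatrix R ^ (r : ℕ)) a (p.getVert i)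
  have hM : M.IsLowerTriangular := fun r i hri =>
    adjMatrix_pow_apply_eq_zero_of_lt_dist (by rw [hdist]; exact hri)
  have hdiag (i : Fin (G.dist a b + 1)) : M i i ≠ 0 := by
    simpa [M, hdist] using adjMatrix_pow_dist_apply_ne_zero (R := R) (p.take i).reachable
  refine LinearIndependent.of_comp entries (linearIndependent_rows_of_det_ne_zero (A := M) ?_)
  rw [det_of_isLowerTriangular M hM]
  exact Finset.prod_ne_zero_iff.mpr fun i _ => hdiag i

end SimpleGraph

theorem nonempty_of_mem_IH {H : FinHypergraph V} {S : Finset V} (hS : S ∈ IH H) :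
    S.Nonempty := by
  simp only [IH, Finset.mem_filter] at hS
  rcases hS.2 with ⟨hne, -⟩ | ⟨w, -, rfl⟩
  · exact hne
  · exact Finset.singleton_nonempty w

namespace FinHypergraph

def exactGraph (H : FinHypergraph V) : SimpleGraph (IH H) where
  Adj S T := Adj H S T
  symm := ⟨fun _ _ ⟨hS, hT, hST, he⟩ =>
    ⟨hT, hS, hST.symm, Finset.union_comm (α := V) _ _ ▸ he⟩⟩
  loopless := ⟨fun _ ⟨hS, _, hSS, _⟩ => hS.ne_empty (disjoint_self.mp hSS)⟩

@[simp]
theorem exactGraph_adj {H : FinHypergraph V} {S T : IH H} :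
    H.exactGraph.Adj S T ↔ Adj H S T := Iff.rfl

instance (H : FinHypergraph V) : DecidableRel H.exactGraph.Adj := fun S T =>
  inferInstanceAs (Decidable ((S : Finset V).Nonempty ∧ (T : Finset V).Nonempty ∧
    Disjoint (S : Finset V) T ∧ (S : Finset V) ∪ T ∈ H.edges))

end FinHypergraph

theorem U_eq_adjMatrix {H : FinHypergraph V} (hs : Simple H) :
    U H = H.exactGraph.adjMatrix ℝ := by
  ext S T
  have hS := nonempty_of_mem_IH S.2
  simp only [SimpleGraph.adjMatrix_apply, FinHypergraph.exactGraph_adj, Adj, U]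
  by_cases hST : (S : Finset V) = T
  · have hS_notMem : (S : Finset V).card = 1 → (S : Finset V) ∉ H.edges :=
      fun h1 hmem => by have := hs.2 _ hmem; omega
    have hS_not_disjoint : ¬ Disjoint (S : Finset V) S := fun h => hS.ne_empty (disjoint_self.mp h)
    rw [← hST]
    split_ifs <;> simp_all
  · simp only [if_neg hST, Multiset.count_eq_of_nodup hs.1, hS, nonempty_of_mem_IH T.2, true_and]
    split_ifs <;> simp_all

theorem exactPathBetween_of_isPath {H : FinHypergraph V} {u v : V} {S T : IH H}
    {p : H.exactGraph.Walk S T} (hp : p.IsPath) (hu : u ∈ (S : Finset V))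
    (hv : v ∈ (T : Finset V)) : ExactPathBetween H u v p.length := by
  refine ⟨p.support.map Subtype.val, by simp, hp.support_nodup.map Subtype.val_injective,
    fun _ hS => by obtain ⟨S', -, rfl⟩ := List.mem_map.mp hS; exact S'.2,
    List.isChain_map_of_isChain (R := H.exactGraph.Adj) Subtype.val (fun _ _ h => h)
      p.isChain_adj_support, ⟨S, ?_, hu⟩, ⟨T, ?_, hv⟩⟩
  · rw [List.head?_map, List.head?_eq_some_head p.support_ne_nil, p.head_support]; rfl
  · rw [List.getLast?_map, List.getLast?_eq_some_getLast p.support_ne_nil, p.getLast_support]; rfl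

theorem ExactPathBetween.exists_walk {H : FinHypergraph V} {u v : V} {n : ℕ}
    (h : ExactPathBetween H u v n) : ∃ (S T : IH H) (p : H.exactGraph.Walk S T),
      u ∈ (S : Finset V) ∧ v ∈ (T : Finset V) ∧ p.length = n := by
  obtain ⟨l, hlen, -, hmem, hchain, ⟨S, hS, hu⟩, ⟨T, hT, hv⟩⟩ := h
  have hne : l.pmap Subtype.mk hmem ≠ [] := by
    rw [Ne, List.pmap_eq_nil_iff, ← List.length_eq_zero_iff, hlen]
    omega
  refine ⟨_, _, .ofSupport _ hne (List.isChain_pmap_of_isChain (S := H.exactGraph.Adj)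
      (f := Subtype.mk) (fun _ _ _ _ h => h) hchain hmem), ?_, ?_, by simp [hlen]⟩
  · simpa only [List.head_pmap, (List.head_eq_iff_head?_eq_some _).mpr hS] using hu
  · simpa only [List.getLast_pmap, (List.getLast_eq_iff_getLast?_eq_some _).mpr hT] using hv

theorem powers_linearIndependent_of_exact_distance (H : FinHypergraph V) (hs : Simple H)
    (u v : V) (t : ℕ) (h1 : ExactPathBetween H u v t)
    (h2 : ∀ s : ℕ, ExactPathBetween H u v s → t ≤ s) :
    LinearIndependent ℂ
      (fun r : Fin (t+1) => ((U H).map (Complex.ofReal : ℝ → ℂ)) ^ (r : ℕ)) := by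
  obtain ⟨S, T, p, hu, hv, rfl⟩ := h1.exists_walk
  have hdist : H.exactGraph.dist S T = p.length := by
    refine le_antisymm (SimpleGraph.dist_le p) (h2 _ ?_)
    obtain ⟨q, hq, hq_length⟩ := p.reachable.exists_path_of_dist
    exact hq_length ▸ exactPathBetween_of_isPath hq hu hv
  rw [U_eq_adjMatrix hs, SimpleGraph.map_adjMatrix Complex.ofReal_zero Complex.ofReal_one,
    ← hdist]
  exact SimpleGraph.linearIndependent_adjMatrix_pow_of_reachable p.reachable
end

section
/- Let H be a finite hypergraph without multiple edges, with e-index k, and let n⁻, n⁰, n⁺ be the numbers of eigenvalues of U(H) that are negative, zero, and positive respectively. Then the complete-clique number satisfies ω(H) ≤ min(n⁻ + n⁰ + 1, n⁰ + n⁺, λ₁(H)). -/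
variable {V : Type} [Fintype V] [DecidableEq V]

/-! On the singletons of a complete clique `W` the unified matrix is the all-ones matrix `J`,
so on vectors `x` supported there the quadratic form of `U H` is `(∑ x)²`. It is therefore
nonnegative on a `|W|`-dimensional subspace and vanishes on a `(|W| - 1)`-dimensional one.
Expanding in an orthonormal eigenbasis, a subspace on which the form is nonnegative (nonpositive)
meets the span of the eigenvectors with negative (positive) eigenvalues trivially, which gives the
two inertia bounds; the Rayleigh quotient of the indicator vector of `W` is `|W|`, which gives
`|W| ≤ λ₁`. -/

open Matrix Finset

lemma card_filter_nonneg_eq {α : Type*} [Fintype α] [DecidableEq α] (g : α → ℝ) :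
    #{i | 0 ≤ g i} = #{i | g i = 0} + #{i | 0 < g i} := by
  rw [← card_union_of_disjoint (disjoint_filter.2 fun _ _ h h' => h'.ne' h), ← filter_or]
  simp only [le_iff_eq_or_lt, eq_comm]

lemma card_filter_nonpos_eq {α : Type*} [Fintype α] [DecidableEq α] (g : α → ℝ) :
    #{i | g i ≤ 0} = #{i | g i < 0} + #{i | g i = 0} := by
  rw [← card_union_of_disjoint (disjoint_filter.2 fun _ _ h h' => h.ne h'), ← filter_or]
  simp only [le_iff_lt_or_eq]

namespace Matrix

variable {n ι α : Type*} [Fintype n] [DecidableEq n] [Fintype ι] [CommSemiring α]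

omit [Fintype ι] in
lemma one_submatrix_transpose_mul_mul (A : Matrix n n α) (f : ι → n) :
    ((1 : Matrix n n α).submatrix id f)ᵀ * A * (1 : Matrix n n α).submatrix id f =
      A.submatrix f f := by
  ext a b
  simp [mul_apply, one_apply]

lemma dotProduct_mulVec_one_submatrix (A : Matrix n n α) (f : ι → n) (x : ι → α) :
    ((1 : Matrix n n α).submatrix id f *ᵥ x) ⬝ᵥ A *ᵥ ((1 : Matrix n n α).submatrix id f *ᵥ x) =
      x ⬝ᵥ A.submatrix f f *ᵥ x := by
  rw [← one_submatrix_transpose_mul_mul, ← mulVec_mulVec, ← mulVec_mulVec, mulVec_transpose,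
    dotProduct_comm, dotProduct_mulVec, dotProduct_comm]

lemma one_submatrix_mulVec_dotProduct_self [DecidableEq ι] {f : ι → n}
    (hf : Function.Injective f) (x : ι → α) :
    ((1 : Matrix n n α).submatrix id f *ᵥ x) ⬝ᵥ ((1 : Matrix n n α).submatrix id f *ᵥ x) =
      x ⬝ᵥ x := by
  simpa [submatrix_one f hf] using dotProduct_mulVec_one_submatrix 1 f x

omit [Fintype n] [DecidableEq n] in
lemma dotProduct_mulVec_ones (x : ι → α) :
    x ⬝ᵥ (of fun _ _ => (1 : α)) *ᵥ x = (∑ i, x i) ^ 2 := by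
  simp [dotProduct, mulVec, sq, Finset.sum_mul]

lemma injective_mulVecLin_one_submatrix [DecidableEq ι] {f : ι → n}
    (hf : Function.Injective f) :
    Function.Injective ((1 : Matrix n n ℝ).submatrix id f).mulVecLin := by
  rw [← LinearMap.ker_eq_bot, LinearMap.ker_eq_bot']
  intro x hx
  rw [← dotProduct_self_eq_zero, ← one_submatrix_mulVec_dotProduct_self hf]
  simp_all

end Matrix

namespace Matrix.IsHermitian

variable {n : Type*} [Fintype n] [DecidableEq n] {A : Matrix n n ℝ} (hA : A.IsHermitian)

noncomputable def eigenCoords (x : n → ℝ) : n → ℝ :=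
  star (hA.eigenvectorUnitary : Matrix n n ℝ) *ᵥ x

lemma dotProduct_mulVec_eq_sum_eigenvalues (x : n → ℝ) :
    x ⬝ᵥ A *ᵥ x = ∑ i, hA.eigenvalues i * hA.eigenCoords x i ^ 2 := by
  conv_lhs => rw [hA.spectral_theorem, Unitary.conjStarAlgAut_apply]
  rw [← mulVec_mulVec, ← mulVec_mulVec, dotProduct_mulVec, ← mulVec_transpose,
    ← conjTranspose_eq_transpose_of_trivial]
  simp only [eigenCoords, ← star_eq_conjTranspose, dotProduct, mulVec_diagonal,
    RCLike.ofReal_real_eq_id, Function.comp, id]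
  exact Finset.sum_congr rfl fun i _ => by ring

lemma sum_eigenCoords_sq (x : n → ℝ) : ∑ i, hA.eigenCoords x i ^ 2 = x ⬝ᵥ x := by
  simp only [sq]
  change star _ *ᵥ x ⬝ᵥ star _ *ᵥ x = _
  rw [dotProduct_mulVec, ← mulVec_transpose, ← conjTranspose_eq_transpose_of_trivial,
    ← star_eq_conjTranspose, star_star, mulVec_mulVec,
    mem_unitaryGroup_iff.mp hA.eigenvectorUnitary.2, one_mulVec]

lemma eigenCoords_eq_zero_iff {x : n → ℝ} : hA.eigenCoords x = 0 ↔ x = 0 := by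
  rw [← dotProduct_self_eq_zero (v := x), ← hA.sum_eigenCoords_sq, ← dotProduct_self_eq_zero]
  simp only [dotProduct, sq]

lemma dotProduct_mulVec_le {μ : ℝ} (hμ : ∀ i, hA.eigenvalues i ≤ μ) (x : n → ℝ) :
    x ⬝ᵥ A *ᵥ x ≤ μ * (x ⬝ᵥ x) := by
  rw [hA.dotProduct_mulVec_eq_sum_eigenvalues, ← hA.sum_eigenCoords_sq, Finset.mul_sum]
  exact Finset.sum_le_sum fun i _ => mul_le_mul_of_nonneg_right (hμ i) (sq_nonneg _)

lemma apply_self_le {μ : ℝ} (hμ : ∀ i, hA.eigenvalues i ≤ μ) (j : n) : A j j ≤ μ := by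
  simpa using hA.dotProduct_mulVec_le hμ (Pi.single j 1)

lemma finrank_le_card_of_eigenCoords (E : Submodule ℝ (n → ℝ)) (s : Finset n)
    (hs : ∀ x ∈ E, (∀ i ∈ s, hA.eigenCoords x i = 0) → x = 0) :
    Module.finrank ℝ E ≤ #s := by
  let restrict : E →ₗ[ℝ] (s → ℝ) :=
    LinearMap.funLeft ℝ ℝ Subtype.val ∘ₗ
      (star (hA.eigenvectorUnitary : Matrix n n ℝ)).mulVecLin ∘ₗ E.subtype
  have h_inj : Function.Injective restrict := by
    rw [← LinearMap.ker_eq_bot, LinearMap.ker_eq_bot']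
    rintro ⟨x, hx⟩ hzero
    exact Subtype.ext (hs x hx fun i hi => congrFun hzero ⟨i, hi⟩)
  simpa using LinearMap.finrank_le_finrank_of_injective h_inj

lemma finrank_le_card_nonneg_eigenvalues (E : Submodule ℝ (n → ℝ))
    (hE : ∀ x ∈ E, 0 ≤ x ⬝ᵥ A *ᵥ x) :
    Module.finrank ℝ E ≤ #{i | 0 ≤ hA.eigenvalues i} := by
  refine hA.finrank_le_card_of_eigenCoords E _ fun x hx hc => ?_
  have hc' : ∀ i, 0 ≤ hA.eigenvalues i → hA.eigenCoords x i = 0 := fun i hi => hc i (by simpa)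
  have hterm : ∀ i ∈ univ, hA.eigenvalues i * hA.eigenCoords x i ^ 2 ≤ 0 := fun i _ => by
    by_cases hi : 0 ≤ hA.eigenvalues i
    · simp [hc' i hi]
    · exact mul_nonpos_of_nonpos_of_nonneg (by linarith) (sq_nonneg _)
  have hsum := le_antisymm (Finset.sum_nonpos hterm)
    (hA.dotProduct_mulVec_eq_sum_eigenvalues x ▸ hE x hx)
  rw [← hA.eigenCoords_eq_zero_iff]
  funext i
  rcases mul_eq_zero.1 ((sum_eq_zero_iff_of_nonpos hterm).1 hsum i (mem_univ i)) with h | h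
  · exact hc' i h.ge
  · exact pow_eq_zero_iff two_ne_zero |>.1 h

lemma finrank_le_card_nonpos_eigenvalues (E : Submodule ℝ (n → ℝ))
    (hE : ∀ x ∈ E, x ⬝ᵥ A *ᵥ x ≤ 0) :
    Module.finrank ℝ E ≤ #{i | hA.eigenvalues i ≤ 0} := by
  refine hA.finrank_le_card_of_eigenCoords E _ fun x hx hc => ?_
  have hc' : ∀ i, hA.eigenvalues i ≤ 0 → hA.eigenCoords x i = 0 := fun i hi => hc i (by simpa)
  have hterm : ∀ i ∈ univ, 0 ≤ hA.eigenvalues i * hA.eigenCoords x i ^ 2 := fun i _ => by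
    by_cases hi : hA.eigenvalues i ≤ 0
    · simp [hc' i hi]
    · exact mul_nonneg (by linarith) (sq_nonneg _)
  have hsum := le_antisymm (hA.dotProduct_mulVec_eq_sum_eigenvalues x ▸ hE x hx)
    (Finset.sum_nonneg hterm)
  rw [← hA.eigenCoords_eq_zero_iff]
  funext i
  rcases mul_eq_zero.1 ((sum_eq_zero_iff_of_nonneg hterm).1 hsum i (mem_univ i)) with h | h
  · exact hc' i h.le
  · exact pow_eq_zero_iff two_ne_zero |>.1 h

variable {ι : Type*} [Fintype ι] [DecidableEq ι] {f : ι → n}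

lemma card_le_card_nonneg_eigenvalues_of_submatrix_eq_ones (hf : Function.Injective f)
    (hJ : A.submatrix f f = of fun _ _ => 1) :
    Fintype.card ι ≤ #{i | 0 ≤ hA.eigenvalues i} := by
  set P := (1 : Matrix n n ℝ).submatrix id f
  calc Fintype.card ι = Module.finrank ℝ (LinearMap.range P.mulVecLin) := by
        rw [LinearMap.finrank_range_of_inj (injective_mulVecLin_one_submatrix hf),
          Module.finrank_fintype_fun_eq_card]
    _ ≤ _ := hA.finrank_le_card_nonneg_eigenvalues _ <| by
        rintro _ ⟨x, rfl⟩
        rw [mulVecLin_apply, dotProduct_mulVec_one_submatrix, hJ, dotProduct_mulVec_ones]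
        positivity

lemma card_le_card_nonpos_eigenvalues_add_one_of_submatrix_eq_ones (hf : Function.Injective f)
    (hJ : A.submatrix f f = of fun _ _ => 1) :
    Fintype.card ι ≤ #{i | hA.eigenvalues i ≤ 0} + 1 := by
  set P := (1 : Matrix n n ℝ).submatrix id f
  set φ : Module.Dual ℝ (ι → ℝ) := dotProductEquiv ℝ ι 1
  have h_ker : Fintype.card ι ≤ Module.finrank ℝ (LinearMap.ker φ) + 1 := by
    have h_range : Module.finrank ℝ (LinearMap.range φ) ≤ 1 := by
      simpa using (LinearMap.range φ).finrank_le
    have := φ.finrank_range_add_finrank_ker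
    rw [Module.finrank_fintype_fun_eq_card] at this
    omega
  have h_map : Module.finrank ℝ ((LinearMap.ker φ).map P.mulVecLin) ≤
      #{i | hA.eigenvalues i ≤ 0} := hA.finrank_le_card_nonpos_eigenvalues _ <| by
    rintro _ ⟨x, hx, rfl⟩
    have hsum : ∑ i, x i = 0 := by simpa [φ, one_dotProduct] using hx
    rw [mulVecLin_apply, dotProduct_mulVec_one_submatrix, hJ, dotProduct_mulVec_ones, hsum]
    norm_num
  rw [← LinearEquiv.finrank_eq (Submodule.equivMapOfInjective _
    (injective_mulVecLin_one_submatrix hf) _)] at h_map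
  omega

lemma card_le_of_submatrix_eq_ones [Nonempty ι] (hf : Function.Injective f)
    (hJ : A.submatrix f f = of fun _ _ => 1) {μ : ℝ} (hμ : ∀ i, hA.eigenvalues i ≤ μ) :
    (Fintype.card ι : ℝ) ≤ μ := by
  have h := hA.dotProduct_mulVec_le hμ ((1 : Matrix n n ℝ).submatrix id f *ᵥ 1)
  rw [dotProduct_mulVec_one_submatrix, hJ, dotProduct_mulVec_ones,
    one_submatrix_mulVec_dotProduct_self hf, dotProduct_one] at h
  simp only [Pi.one_apply, sum_const, card_univ, nsmul_eq_mul, mul_one] at h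
  exact le_of_mul_le_mul_right (by rwa [sq] at h) (by positivity)

end Matrix.IsHermitian

lemma singleton_mem_IH {H : FinHypergraph V} {v : V} (hv : v ∈ H.verts) : {v} ∈ IH H := by
  simp only [IH, mem_filter, mem_univ, true_and]
  exact Or.inr ⟨v, hv, rfl⟩

def singletonIdx {H : FinHypergraph V} {W : Finset V} (hW : W ⊆ H.verts) (v : W) : IH H :=
  ⟨{(v : V)}, singleton_mem_IH (hW v.2)⟩

lemma singletonIdx_injective {H : FinHypergraph V} {W : Finset V} (hW : W ⊆ H.verts) :
    Function.Injective (singletonIdx hW) := fun _ _ h =>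
  Subtype.ext (singleton_injective (congrArg Subtype.val h))

lemma U_apply_self_nonneg (H : FinHypergraph V) (S : IH H) : 0 ≤ U H S S := by
  simp only [U]
  split_ifs <;> positivity

lemma U_submatrix_singletonIdx {H : FinHypergraph V} (hd : H.edges.Nodup) {W : Finset V}
    (hW : W ⊆ H.verts) (hpairs : ∀ v ∈ W, ∀ w ∈ W, {v, w} ∈ H.edges) :
    (U H).submatrix (singletonIdx hW) (singletonIdx hW) = of fun _ _ => 1 := by
  ext v w
  have hvw := hpairs v v.2 w w.2
  by_cases h : (v : V) = w
  · rw [h, pair_eq_singleton] at hvw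
    simp [U, singletonIdx, h, Multiset.count_eq_one_of_mem hd hvw]
  · simp [U, singletonIdx, h, Multiset.count_eq_one_of_mem hd hvw]

theorem complete_clique_bound (H : FinHypergraph V) (hd : H.edges.Nodup)
    (hU : (U H).IsHermitian)
    (i₀ : ↥(IH H)) (hmax : ∀ i, hU.eigenvalues i ≤ hU.eigenvalues i₀)
    (W : Finset V) (hW : W ⊆ H.verts)
    (hclique : ∀ s ⊆ W, s.Nonempty → s ∈ H.edges) :
    W.card ≤ (Finset.univ.filter (fun i : ↥(IH H) => hU.eigenvalues i < 0)).card +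
             (Finset.univ.filter (fun i : ↥(IH H) => hU.eigenvalues i = 0)).card + 1 ∧
    W.card ≤ (Finset.univ.filter (fun i : ↥(IH H) => hU.eigenvalues i = 0)).card +
             (Finset.univ.filter (fun i : ↥(IH H) => 0 < hU.eigenvalues i)).card ∧
    (W.card : ℝ) ≤ hU.eigenvalues i₀ := by
  have hJ := U_submatrix_singletonIdx hd hW fun v hv w hw =>
    hclique _ (insert_subset hv (singleton_subset_iff.2 hw)) (insert_nonempty _ _)
  have hf := singletonIdx_injective hW
  rw [← Fintype.card_coe W]
  refine ⟨?_, ?_, ?_⟩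
  · rw [← card_filter_nonpos_eq]
    exact hU.card_le_card_nonpos_eigenvalues_add_one_of_submatrix_eq_ones hf hJ
  · rw [← card_filter_nonneg_eq]
    exact hU.card_le_card_nonneg_eigenvalues_of_submatrix_eq_ones hf hJ
  · rcases isEmpty_or_nonempty W with hW₀ | hW₀
    · rw [Fintype.card_eq_zero, Nat.cast_zero]
      exact (U_apply_self_nonneg H i₀).trans (hU.apply_self_le hmax i₀)
    · exact hU.card_le_of_submatrix_eq_ones hf hJ hmax
end

section
/- Let H be a unified path whose edges and parts are arranged as an exact path EP: S_0, e_1, S_1, e_2, ..., e_n, S_n with n > 1 and pairwise disjoint parts S_i. If the edges and some parts of H are arranged into another exact path EP₁ with pairwise disjoint parts, then EP₁ is either EP itself or its reverse S_n, e_n, S_{n-1}, ..., e_1, S_0. -/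
variable {V : Type} [Fintype V] [DecidableEq V]

/-! The first edge of an arrangement with pairwise disjoint parts meets at most two of its
edges (itself and the next one), whereas an interior edge `S_{i-1} ∪ S_i` of `l` meets three
(`S_{i-2} ∪ S_{i-1}`, itself and `S_i ∪ S_{i+1}`). Hence the first edge of `l'` is the first edge
of `l` or of `l.reverse`. Given the first edge, the first part is forced: as `n ≥ 2`, it consists
of the points of the first edge lying in no later edge. Given the first part `S_0`, the only
edge meeting it is `S_0 ∪ S_1`, which forces `S_1`; removing that edge, induction does the rest. -/

section PathEdges

variable {α : Type*} [DecidableEq α]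

def pathEdges (l : List (Finset α)) : List (Finset α) :=
  (l.zip l.tail).map fun p => p.1 ∪ p.2

@[simp] lemma pathEdges_nil : pathEdges ([] : List (Finset α)) = [] := rfl

@[simp] lemma pathEdges_singleton (a : Finset α) : pathEdges [a] = [] := rfl

@[simp] lemma pathEdges_cons_cons (a b : Finset α) (t : List (Finset α)) :
    pathEdges (a :: b :: t) = (a ∪ b) :: pathEdges (b :: t) := rfl

@[simp] lemma length_pathEdges (l : List (Finset α)) : (pathEdges l).length = l.length - 1 := by
  simp [pathEdges]

lemma pathEdges_append_pair (l : List (Finset α)) (a b : Finset α) :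
    pathEdges (l ++ [a, b]) = pathEdges (l ++ [a]) ++ [a ∪ b] := by
  induction l with
  | nil => rfl
  | cons c l ih => rcases l with _ | ⟨d, l⟩ <;> simp_all

lemma pathEdges_reverse (l : List (Finset α)) : pathEdges l.reverse = (pathEdges l).reverse := by
  induction l with
  | nil => rfl
  | cons a l ih =>
    rcases l with _ | ⟨b, t⟩
    · rfl
    · simp only [List.reverse_cons, List.append_assoc, List.singleton_append] at ih ⊢
      rw [pathEdges_append_pair, ih, pathEdges_cons_cons, List.reverse_cons, Finset.union_comm]

lemma disjoint_of_mem_pathEdges {s e : Finset α} {l : List (Finset α)}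
    (h : ∀ S ∈ l, Disjoint s S) (he : e ∈ pathEdges l) : Disjoint s e := by
  obtain ⟨⟨p, q⟩, hpq, rfl⟩ := List.mem_map.1 he
  have hpq := List.of_mem_zip hpq
  exact Finset.disjoint_union_right.2 ⟨h p hpq.1, h q (List.mem_of_mem_tail hpq.2)⟩

lemma exists_eq_append_of_mem_pathEdges {e : Finset α} {l : List (Finset α)}
    (he : e ∈ pathEdges l) : ∃ u p q v, l = u ++ p :: q :: v ∧ e = p ∪ q := by
  induction l with
  | nil => simp at he
  | cons a t ih =>
    rcases t with _ | ⟨b, t⟩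
    · simp at he
    rcases List.mem_cons.1 he with rfl | he
    · exact ⟨[], a, b, t, rfl, rfl⟩
    · obtain ⟨u, p, q, v, hl, rfl⟩ := ih he
      exact ⟨a :: u, p, q, v, by rw [hl, List.cons_append], rfl⟩

lemma pathEdges_suffix_cons (a : Finset α) (l : List (Finset α)) :
    pathEdges l <:+ pathEdges (a :: l) := by
  rcases l with _ | ⟨b, l⟩
  · exact List.suffix_refl _
  · exact List.suffix_cons _ _

lemma pathEdges_suffix_append (u m : List (Finset α)) : pathEdges m <:+ pathEdges (u ++ m) := by
  induction u with
  | nil => exact List.suffix_refl _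
  | cons a u ih => exact ih.trans (pathEdges_suffix_cons a _)

lemma countP_not_disjoint_pathEdges_le_two {a b : Finset α} {t : List (Finset α)}
    (hd : (a :: b :: t).Pairwise Disjoint) :
    (pathEdges (a :: b :: t) : Multiset (Finset α)).countP (¬Disjoint (a ∪ b) ·) ≤ 2 := by
  rcases t with _ | ⟨c, t⟩
  · exact (Multiset.countP_le_card _ _).trans (by simp)
  have hrest : ∀ S ∈ c :: t, Disjoint (a ∪ b) S := fun S hS =>
    Finset.disjoint_union_left.2
      ⟨List.rel_of_pairwise_cons hd (.tail _ hS), List.rel_of_pairwise_cons hd.of_cons hS⟩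
  have hzero : (pathEdges (c :: t)).countP (fun f => decide ¬Disjoint (a ∪ b) f) = 0 :=
    List.countP_eq_zero.2 fun f hf => by simpa using disjoint_of_mem_pathEdges hrest hf
  rw [Multiset.coe_countP, pathEdges_cons_cons, pathEdges_cons_cons, List.countP_cons,
    List.countP_cons, hzero]
  split_ifs <;> simp

lemma three_le_countP_not_disjoint_pathEdges {p q : Finset α} (hp : p.Nonempty)
    (hq : q.Nonempty) (u v : List (Finset α)) (x y : Finset α) :
    3 ≤ (pathEdges (u ++ x :: p :: q :: y :: v) : Multiset (Finset α)).countP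
      (¬Disjoint (p ∪ q) ·) := by
  have hsub : [x ∪ p, p ∪ q, q ∪ y].Sublist (pathEdges (u ++ x :: p :: q :: y :: v)) :=
    (List.prefix_append _ (pathEdges (y :: v))).sublist.trans
      (pathEdges_suffix_append u (x :: p :: q :: y :: v)).sublist
  obtain ⟨z, hz⟩ := hp
  obtain ⟨w, hw⟩ := hq
  have hmeet : ∀ f ∈ [x ∪ p, p ∪ q, q ∪ y], ¬Disjoint (p ∪ q) f := by
    simp only [List.mem_cons, List.not_mem_nil, or_false, forall_eq_or_imp, forall_eq]
    refine ⟨?_, ?_, ?_⟩ <;> rw [Finset.not_disjoint_iff]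
    · exact ⟨z, by simp [hz]⟩
    · exact ⟨z, by simp [hz]⟩
    · exact ⟨w, by simp [hw]⟩
  rw [Multiset.coe_countP]
  calc 3 = [x ∪ p, p ∪ q, q ∪ y].countP (fun f => decide ¬Disjoint (p ∪ q) f) :=
        by rw [List.countP_eq_length.2 fun f hf => decide_eq_true (hmeet f hf)]; rfl
    _ ≤ _ := hsub.countP_le

lemma head?_pathEdges_eq_of_countP_le_two {l : List (Finset α)} {e : Finset α}
    (hne : ∀ S ∈ l, S.Nonempty) (he : e ∈ pathEdges l)
    (hmeet : (pathEdges l : Multiset (Finset α)).countP (¬Disjoint e ·) ≤ 2) :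
    (pathEdges l).head? = some e ∨ (pathEdges l.reverse).head? = some e := by
  obtain ⟨u, p, q, v, rfl, rfl⟩ := exists_eq_append_of_mem_pathEdges he
  rcases List.eq_nil_or_concat u with rfl | ⟨u, x, rfl⟩
  · exact .inl rfl
  rcases v with _ | ⟨y, v⟩
  · right
    simp [Finset.union_comm]
  · have h3 := three_le_countP_not_disjoint_pathEdges (hne p (by simp)) (hne q (by simp)) u v x y
    simp only [List.concat_eq_append, List.append_assoc, List.cons_append, List.nil_append]
      at hmeet
    omega

lemma mem_head_iff_forall_not_mem_pathEdges {a b c : Finset α} {t : List (Finset α)}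
    (hd : (a :: b :: c :: t).Pairwise Disjoint) {x : α} :
    x ∈ a ↔ x ∈ a ∪ b ∧ ∀ e ∈ pathEdges (b :: c :: t), x ∉ e := by
  refine ⟨fun hx => ⟨Finset.mem_union_left _ hx, fun e he hxe => ?_⟩, fun ⟨hx, hlater⟩ => ?_⟩
  · exact Finset.disjoint_left.1
      (disjoint_of_mem_pathEdges (fun S hS => List.rel_of_pairwise_cons hd hS) he) hx hxe
  · have hxb : x ∉ b := fun hxb => hlater (b ∪ c) (by simp) (Finset.mem_union_left _ hxb)
    simpa [hxb] using hx

lemma head_eq_of_union_eq {a b c a' b' c' : Finset α} {t t' : List (Finset α)}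
    (hd : (a :: b :: c :: t).Pairwise Disjoint) (hd' : (a' :: b' :: c' :: t').Pairwise Disjoint)
    (hE : (pathEdges (a' :: b' :: c' :: t') : Multiset (Finset α)) = pathEdges (a :: b :: c :: t))
    (hab : a' ∪ b' = a ∪ b) : a' = a := by
  have hlater : (pathEdges (b' :: c' :: t') : Multiset (Finset α)) = pathEdges (b :: c :: t) := by
    rwa [pathEdges_cons_cons a, pathEdges_cons_cons a', ← Multiset.cons_coe,
      ← Multiset.cons_coe, hab, Multiset.cons_inj_right] at hE
  ext x
  simp only [mem_head_iff_forall_not_mem_pathEdges hd, mem_head_iff_forall_not_mem_pathEdges hd',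
    hab, ← Multiset.mem_coe, hlater]

lemma eq_of_pathEdges_eq_of_head?_eq {l l' : List (Finset α)} (hne : ∀ S ∈ l, S.Nonempty)
    (hd : l.Pairwise Disjoint) (hd' : l'.Pairwise Disjoint)
    (hE : (pathEdges l' : Multiset (Finset α)) = pathEdges l) (hhead : l'.head? = l.head?) :
    l' = l := by
  induction l generalizing l' with
  | nil => simpa using hhead
  | cons a t ih =>
    obtain ⟨t', rfl⟩ : ∃ t', l' = a :: t' := by
      rcases l' with _ | ⟨a', t'⟩ <;> simp_all
    rcases t with _ | ⟨b, t⟩ <;> rcases t' with _ | ⟨b', t'⟩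
    · rfl
    · simp at hE
    · exact absurd (congrArg Multiset.card hE) (by simp)
    have hfirst : a ∪ b' = a ∪ b := by
      have hmem : a ∪ b' ∈ pathEdges (a :: b :: t) := by rw [← Multiset.mem_coe, ← hE]; simp
      rcases List.mem_cons.1 hmem with h | hlater
      · exact h
      · obtain ⟨z, hz⟩ := hne a (by simp)
        exact absurd (Finset.mem_union_left _ hz) <| Finset.disjoint_left.1
          (disjoint_of_mem_pathEdges (fun S hS => List.rel_of_pairwise_cons hd hS) hlater) hz
    have hb : b' = b := calc
      b' = (a ∪ b') \ a :=
        (Finset.union_sdiff_cancel_left (List.rel_of_pairwise_cons hd' (by simp))).symm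
      _ = (a ∪ b) \ a := by rw [hfirst]
      _ = b := Finset.union_sdiff_cancel_left (List.rel_of_pairwise_cons hd (by simp))
    subst hb
    have hlater : (pathEdges (b' :: t') : Multiset (Finset α)) = pathEdges (b' :: t) := by
      rwa [pathEdges_cons_cons, pathEdges_cons_cons, ← Multiset.cons_coe, ← Multiset.cons_coe,
        Multiset.cons_inj_right] at hE
    rw [ih (fun S hS => hne S (.tail _ hS)) hd.of_cons hd'.of_cons hlater rfl]

lemma length_eq_of_pathEdges_eq {l l' : List (Finset α)}
    (hE : (pathEdges l' : Multiset (Finset α)) = pathEdges l) (hlen : 2 ≤ l.length) :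
    l'.length = l.length := by
  have := congrArg Multiset.card hE
  simp only [Multiset.coe_card, length_pathEdges] at this
  omega

lemma eq_of_pathEdges_eq_of_head?_pathEdges_eq {l l' : List (Finset α)} (hlen : 3 ≤ l.length)
    (hne : ∀ S ∈ l, S.Nonempty) (hd : l.Pairwise Disjoint) (hd' : l'.Pairwise Disjoint)
    (hE : (pathEdges l' : Multiset (Finset α)) = pathEdges l)
    (hfirst : (pathEdges l').head? = (pathEdges l).head?) : l' = l := by
  obtain ⟨a, b, c, t, rfl⟩ : ∃ a b c t, l = a :: b :: c :: t := by
    match l, hlen with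
    | a :: b :: c :: t, _ => exact ⟨a, b, c, t, rfl⟩
  obtain ⟨a', b', c', t', rfl⟩ : ∃ a' b' c' t', l' = a' :: b' :: c' :: t' := by
    match l', length_eq_of_pathEdges_eq hE (by omega), hlen with
    | a' :: b' :: c' :: t', _, _ => exact ⟨a', b', c', t', rfl⟩
  have hab : a' ∪ b' = a ∪ b := by simpa using hfirst
  exact eq_of_pathEdges_eq_of_head?_eq hne hd hd' hE (by simp [head_eq_of_union_eq hd hd' hE hab])

end PathEdges

theorem unified_path_arrangement_unique_general (H : FinHypergraph V) (l l' : List (Finset V))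
    (hlen : 3 ≤ l.length)
    (hne : ∀ S ∈ l, S.Nonempty) (hdisj : l.Pairwise Disjoint)
    (hE : H.edges = (((l.zip l.tail).map fun p => p.1 ∪ p.2 : List (Finset V)) : Multiset (Finset V)))
    (hdisj' : l'.Pairwise Disjoint)
    (hE' : H.edges = (((l'.zip l'.tail).map fun p => p.1 ∪ p.2 : List (Finset V)) : Multiset (Finset V))) :
    l' = l ∨ l' = l.reverse := by
  have hM : (pathEdges l' : Multiset (Finset V)) = pathEdges l := hE'.symm.trans hE
  have hlen' := length_eq_of_pathEdges_eq hM (by omega)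
  obtain ⟨a', b', t', rfl⟩ : ∃ a' b' t', l' = a' :: b' :: t' := by
    rcases l' with _ | ⟨a', _ | ⟨b', t'⟩⟩ <;> simp at hlen' ⊢ <;> omega
  have hmem : a' ∪ b' ∈ pathEdges l := by rw [← Multiset.mem_coe, ← hM]; simp
  have hmeet := countP_not_disjoint_pathEdges_le_two hdisj'
  rw [hM] at hmeet
  rcases head?_pathEdges_eq_of_countP_le_two hne hmem hmeet with hfirst | hfirst
  · exact .inl
      (eq_of_pathEdges_eq_of_head?_pathEdges_eq hlen hne hdisj hdisj' hM (by simp [hfirst]))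
  · refine .inr (eq_of_pathEdges_eq_of_head?_pathEdges_eq (by simpa) (by simpa)
      (List.pairwise_reverse.2 (hdisj.imp fun h => h.symm)) hdisj' ?_ (by simp [hfirst]))
    rwa [pathEdges_reverse, Multiset.coe_reverse]

theorem unified_path_arrangement_unique (H : FinHypergraph V) (l l' : List (Finset V))
    (hlen : 3 ≤ l.length)
    (hne : ∀ S ∈ l, S.Nonempty) (hdisj : l.Pairwise Disjoint)
    (hE : H.edges = (((l.zip l.tail).map fun p => p.1 ∪ p.2 : List (Finset V)) : Multiset (Finset V)))
    (hne' : ∀ S ∈ l', S.Nonempty) (hdisj' : l'.Pairwise Disjoint)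
    (hE' : H.edges = (((l'.zip l'.tail).map fun p => p.1 ∪ p.2 : List (Finset V)) : Multiset (Finset V))) :
    l' = l ∨ l' = l.reverse :=
  unified_path_arrangement_unique_general H l l' hlen hne hdisj hE hdisj' hE'
end

section
/- Let H be a simple hypergraph, u a vertex of H, and H_{uv} the hypergraph obtained from H by adding a new vertex v and the new edge {u, v}. Then the characteristic polynomial of the unified matrix satisfies P_{U(H_{uv})}(x) = x·P_{U(H)}(x) − P_{U(H)({u}|{u})}(x), where U(H)({u}|{u}) is the principal submatrix of U(H) obtained by deleting the row and column indexed by {u}. -/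
/-!
Index `I(H_{uv})` by `Option I(H)`, with `none` for the new index `{v}`. The only proper parts
of the new edge `{u, v}` are `{u}` and `{v}`, and `v` lies in no old index or edge, so the block
of `U(H_{uv})` on `I(H)` is `U(H)`, while the new row and column are the unit vector at `{u}`
with a zero diagonal entry. Expanding `det (X - U(H_{uv}))` along the new row, and the one
off-diagonal cofactor that survives along the new column, gives `X P_{U(H)} - P_{U(H)({u}|{u})}`.
-/

variable {V : Type} [Fintype V] [DecidableEq V]

namespace Matrix

open Polynomial

variable {R : Type*} [CommRing R] {n : Type*} [Fintype n] [DecidableEq n]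

theorem det_updateRow_none_single (A : Matrix (Option n) (Option n) R) :
    (A.updateRow none (Pi.single none 1)).det = (A.submatrix some some).det := by
  let e := (Equiv.optionEquivSumPUnit.{0} n).symm
  rw [← det_submatrix_equiv_self e]
  have hblocks : (A.updateRow none (Pi.single none 1)).submatrix e e =
      fromBlocks (A.submatrix some some) (A.submatrix some fun _ => none) 0 1 := by
    ext (a | a) (b | b) <;> simp [e]
  rw [hblocks, det_fromBlocks_zero₂₁, det_one, mul_one]

theorem det_updateRow_single_self (M : Matrix n n R) (i : n) :
    (M.updateRow i (Pi.single i 1)).det =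
      (M.submatrix ((↑) : {j // j ≠ i} → n) (↑)).det := by
  let e := Equiv.optionSubtypeNe i
  rw [← det_submatrix_equiv_self e]
  have : (M.updateRow i (Pi.single i 1)).submatrix e e =
      (M.submatrix e e).updateRow none (Pi.single none 1) := by
    ext (_ | ⟨a, ha⟩) (_ | ⟨b, hb⟩) <;> simp [e, updateRow_ne, *, Ne.symm]
  rw [this, det_updateRow_none_single]
  rfl

theorem det_updateRow_single_swap (M : Matrix n n R) {i j : n} (hij : i ≠ j) :
    ((M.updateRow i (Pi.single j 1)).updateRow j (Pi.single i 1)).det =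
      -((M.updateRow j (Pi.single j 1)).updateRow i (Pi.single i 1)).det := by
  have hswap : ((M.updateRow i (Pi.single j 1)).updateRow j (Pi.single i 1)).submatrix
      (Equiv.swap i j) id = (M.updateRow j (Pi.single j 1)).updateRow i (Pi.single i 1) := by
    ext a b
    rcases eq_or_ne a i with rfl | hai
    · simp
    rcases eq_or_ne a j with rfl | haj
    · simp [updateRow_ne hij, updateRow_ne hai]
    · simp [Equiv.swap_apply_of_ne_of_ne hai haj, updateRow_ne hai, updateRow_ne haj]
  rw [← hswap, det_permute, Equiv.Perm.sign_swap hij]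
  simp

theorem det_option_of_row_col_single (A : Matrix (Option n) (Option n) R) (i : n) (r s : R)
    (hrow : ∀ b, A none (some b) = (Pi.single i r : n → R) b)
    (hcol : ∀ a, A (some a) none = (Pi.single i s : n → R) a) :
    A.det = A none none * (A.submatrix some some).det -
      r * s * ((A.submatrix some some).submatrix ((↑) : {j // j ≠ i} → n) (↑)).det := by
  have hcofactor_none : adjugate A none none = (A.submatrix some some).det := by
    rw [adjugate_apply, det_updateRow_none_single]
  have hcofactor_some : adjugate A (some i) none =
      -(s * ((A.submatrix some some).submatrix ((↑) : {j // j ≠ i} → n) (↑)).det) := by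
    set A₁ := A.updateRow none (Pi.single (some i) 1)
    have hexpand : A₁.det = s * adjugate A₁ none (some i) := by
      rw [det_eq_sum_mul_adjugate_col A₁ none, Fintype.sum_option]
      simp [A₁, updateRow_ne, hcol, Pi.single_apply]
    rw [adjugate_apply, hexpand, adjugate_apply,
      det_updateRow_single_swap _ (Option.some_ne_none i).symm]
    have hrestrict : (A.updateRow (some i) (Pi.single (some i) 1)).submatrix some some =
        (A.submatrix some some).updateRow i (Pi.single i 1) := by
      ext a b
      rcases eq_or_ne a i with rfl | hai
      · simp [Pi.single_apply]
      · simp [updateRow_ne hai, updateRow_ne (Option.some_injective _ |>.ne hai)]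
    rw [det_updateRow_none_single, hrestrict, det_updateRow_single_self]
    ring
  rw [det_eq_sum_mul_adjugate_row A none, Fintype.sum_option, hcofactor_none]
  simp [hrow, Pi.single_apply, hcofactor_some]
  ring

theorem charmatrix_submatrix {m : Type*} [Fintype m] [DecidableEq m] (M : Matrix n n R)
    {e : m → n} (he : Function.Injective e) :
    charmatrix (M.submatrix e e) = (charmatrix M).submatrix e e := by
  ext a b : 1
  rcases eq_or_ne a b with rfl | hab
  · simp
  · simp [hab, he.ne hab]

theorem charpoly_option_of_row_col_single (M : Matrix (Option n) (Option n) R) (i : n)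
    (hnone : M none none = 0) (hrow : ∀ b, M none (some b) = (Pi.single i 1 : n → R) b)
    (hcol : ∀ a, M (some a) none = (Pi.single i 1 : n → R) a) :
    M.charpoly = X * (M.submatrix some some).charpoly -
      ((M.submatrix some some).submatrix ((↑) : {j // j ≠ i} → n) (↑)).charpoly := by
  have hsingle : ∀ b, -C ((Pi.single i 1 : n → R) b) = (Pi.single i (-1) : n → R[X]) b := by
    intro b
    rcases eq_or_ne b i with rfl | hbi <;> simp [*]
  rw [charpoly, det_option_of_row_col_single (charmatrix M) i (-1) (-1)
    (fun b => by simp [hrow, hsingle]) (fun a => by simp [hcol, hsingle]),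
    charmatrix_apply_eq, hnone, ← charmatrix_submatrix _ (Option.some_injective n),
    ← charmatrix_submatrix _ Subtype.val_injective]
  simp [charpoly]

end Matrix

theorem mem_IH {H : FinHypergraph V} {S : Finset V} :
    S ∈ IH H ↔ (S.Nonempty ∧ ∃ e ∈ H.edges, S ⊂ e) ∨ ∃ v ∈ H.verts, S = {v} := by
  simp [IH]

theorem subset_verts_of_mem_IH {H : FinHypergraph V} {S : Finset V} (hS : S ∈ IH H) :
    S ⊆ H.verts := by
  rcases mem_IH.1 hS with ⟨-, e, he, hSe⟩ | ⟨w, hw, rfl⟩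
  · exact hSe.subset.trans (H.edges_sub e he)
  · exact Finset.singleton_subset_iff.2 hw

theorem Finset.eq_singleton_of_ssubset_pair {α : Type*} [DecidableEq α] {s : Finset α} {a b : α}
    (hs : s.Nonempty) (h : s ⊂ {a, b}) : s = {a} ∨ s = {b} := by
  obtain ⟨c, rfl⟩ : ∃ c, s = {c} := by
    have := Finset.card_lt_card h
    have := Finset.card_le_two (a := a) (b := b)
    have := hs.card_pos
    exact Finset.card_eq_one.1 (by omega)
  simpa using h.subset

theorem Finset.insert_eq_pair_iff {α : Type*} [DecidableEq α] {s : Finset α} {a b : α}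
    (hs : a ∉ s) (hab : b ≠ a) : insert a s = {b, a} ↔ s = {b} := by
  constructor
  · intro h
    rw [← erase_insert hs, h, pair_comm, erase_insert (by simpa using hab.symm)]
  · rintro rfl
    exact pair_comm a b

theorem IH_eq_insert_of_pendant {H H' : FinHypergraph V} {u v : V} (hu : u ∈ H.verts)
    (hV' : H'.verts = insert v H.verts) (hE' : H'.edges = ({u, v} : Finset V) ::ₘ H.edges) :
    IH H' = insert {v} (IH H) := by
  ext S
  simp only [Finset.mem_insert, mem_IH, hV', hE', Multiset.mem_cons, Finset.mem_insert]
  constructor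
  · rintro (⟨hS, e, rfl | he, hSe⟩ | ⟨w, rfl | hw, rfl⟩)
    · rcases Finset.eq_singleton_of_ssubset_pair hS hSe with rfl | rfl
      · exact Or.inr (Or.inr ⟨u, hu, rfl⟩)
      · exact Or.inl rfl
    · exact Or.inr (Or.inl ⟨hS, e, he, hSe⟩)
    · exact Or.inl rfl
    · exact Or.inr (Or.inr ⟨w, hw, rfl⟩)
  · rintro (rfl | ⟨hS, e, he, hSe⟩ | ⟨w, hw, rfl⟩)
    · exact Or.inr ⟨v, Or.inl rfl, rfl⟩
    · exact Or.inl ⟨hS, e, Or.inr he, hSe⟩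
    · exact Or.inr ⟨w, Or.inr hw, rfl⟩

theorem U_comm (H : FinHypergraph V) (S T : IH H) : U H S T = U H T S := by
  unfold U
  by_cases hST : (S : Finset V) = T
  · simp [hST]
  · simp [hST, Ne.symm hST, disjoint_comm, Finset.union_comm]

section Pendant

variable {H H' : FinHypergraph V} {u v : V}

theorem count_pendant_edges_of_notMem (hE' : H'.edges = ({u, v} : Finset V) ::ₘ H.edges)
    {A : Finset V} (hA : v ∉ A) : H'.edges.count A = H.edges.count A := by
  rw [hE', Multiset.count_cons, if_neg (by rintro rfl; simp at hA), add_zero]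

theorem count_pendant_edges_of_mem (hv : v ∉ H.verts)
    (hE' : H'.edges = ({u, v} : Finset V) ::ₘ H.edges) {A : Finset V} (hA : v ∈ A) :
    H'.edges.count A = if A = {u, v} then 1 else 0 := by
  rw [hE', Multiset.count_cons,
    Multiset.count_eq_zero_of_notMem fun he => hv (H.edges_sub A he hA), zero_add]

theorem U_pendant_apply_old_old (hv : v ∉ H.verts)
    (hE' : H'.edges = ({u, v} : Finset V) ::ₘ H.edges)
    {S T : IH H'} {S₀ T₀ : IH H} (hS : (S : Finset V) = S₀) (hT : (T : Finset V) = T₀) :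
    U H' S T = U H S₀ T₀ := by
  have hvS : v ∉ (S₀ : Finset V) := fun h => hv (subset_verts_of_mem_IH S₀.2 h)
  have hvT : v ∉ (T₀ : Finset V) := fun h => hv (subset_verts_of_mem_IH T₀.2 h)
  unfold U
  simp only [hS, hT, count_pendant_edges_of_notMem hE' hvS,
    count_pendant_edges_of_notMem hE' (Finset.notMem_union.2 ⟨hvS, hvT⟩)]

theorem U_pendant_apply_new_old (hv : v ∉ H.verts)
    (hE' : H'.edges = ({u, v} : Finset V) ::ₘ H.edges)
    (huv : u ≠ v) {S T : IH H'} {T₀ : IH H} (hS : (S : Finset V) = {v})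
    (hT : (T : Finset V) = T₀) :
    U H' S T = if (T₀ : Finset V) = {u} then 1 else 0 := by
  have hvT : v ∉ (T₀ : Finset V) := fun h => hv (subset_verts_of_mem_IH T₀.2 h)
  unfold U
  rw [if_neg (by rw [hS, hT]; rintro h; exact hvT (h ▸ Finset.mem_singleton_self v)),
    if_pos (by rw [hS, hT]; exact Finset.disjoint_singleton_left.2 hvT), hS, hT,
    count_pendant_edges_of_mem hv hE' (by simp), ← Finset.insert_eq]
  simp only [Finset.insert_eq_pair_iff hvT huv, Nat.cast_ite, Nat.cast_one, Nat.cast_zero]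

theorem U_pendant_apply_new_new (hv : v ∉ H.verts)
    (hE' : H'.edges = ({u, v} : Finset V) ::ₘ H.edges)
    (huv : u ≠ v) {S T : IH H'} (hS : (S : Finset V) = {v}) (hT : (T : Finset V) = {v}) :
    U H' S T = 0 := by
  unfold U
  rw [if_pos (hS.trans hT.symm), hS, count_pendant_edges_of_mem hv hE' (by simp)]
  simp [Finset.ext_iff, huv]

end Pendant

theorem pendant_edge_charpoly_general (H H' : FinHypergraph V) (u v : V)
    (hu : u ∈ H.verts) (hv : v ∉ H.verts)
    (hV' : H'.verts = insert v H.verts)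
    (hE' : H'.edges = ({u, v} : Finset V) ::ₘ H.edges) :
    (U H').charpoly = Polynomial.X * (U H).charpoly -
      (Matrix.of (fun i j : {S : ↥(IH H) // (S : Finset V) ≠ {u}} => U H i.1 j.1)).charpoly := by
  have huv : u ≠ v := fun h => hv (h ▸ hu)
  have hvIH : ({v} : Finset V) ∉ IH H :=
    fun h => hv (subset_verts_of_mem_IH h (Finset.mem_singleton_self v))
  let g : Option (IH H) ≃ IH H' := ((Equiv.subtypeEquivRight fun _ => by
    rw [IH_eq_insert_of_pendant hu hV' hE']).trans (Finset.subtypeInsertEquivOption hvIH)).symm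
  let u₀ : IH H := ⟨{u}, mem_IH.2 (Or.inr ⟨u, hu, rfl⟩)⟩
  have hold : ((U H').submatrix g g).submatrix some some = U H := by
    ext S T
    exact U_pendant_apply_old_old hv hE' rfl rfl
  have hnew : ∀ T, (U H').submatrix g g none (some T) = (Pi.single u₀ 1 : IH H → ℝ) T := by
    intro T
    rw [Matrix.submatrix_apply, U_pendant_apply_new_old hv hE' huv rfl rfl]
    simp [Pi.single_apply, Subtype.ext_iff, u₀]
  let e : {S : IH H // S ≠ u₀} ≃ {S : IH H // (S : Finset V) ≠ {u}} :=
    Equiv.subtypeEquivRight fun _ => Subtype.ext_iff.not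
  calc (U H').charpoly = ((U H').submatrix g g).charpoly :=
        (Matrix.charpoly_reindex g.symm (U H')).symm
    _ = Polynomial.X * (U H).charpoly -
          ((U H).submatrix ((↑) : {S // S ≠ u₀} → IH H) (↑)).charpoly := by
        rw [Matrix.charpoly_option_of_row_col_single _ u₀
          (U_pendant_apply_new_new hv hE' huv rfl rfl) hnew
          (fun T => (U_comm _ _ _).trans (hnew T)), hold]
    _ = _ := congrArg _ (Matrix.charpoly_reindex e _).symm

theorem pendant_edge_charpoly (H H' : FinHypergraph V) (hs : Simple H) (u v : V)
    (hu : u ∈ H.verts) (hv : v ∉ H.verts)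
    (hV' : H'.verts = insert v H.verts)
    (hE' : H'.edges = ({u, v} : Finset V) ::ₘ H.edges) :
    (U H').charpoly = Polynomial.X * (U H).charpoly -
      (Matrix.of (fun i j : {S : ↥(IH H) // (S : Finset V) ≠ {u}} => U H i.1 j.1)).charpoly :=
  pendant_edge_charpoly_general H H' u v hu hv hV' hE'
end
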